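/- arXiv:2312.08829 — 5 statements merged into one kernel-verified Lean document; each statement's English description precedes it below -/
import Mathlib

section
/- (Lemma 1, part 1.) Consider the constrained optimal control problem: maximize J(x₀,u) = ∑_{t=0}^{t_f} L(x_t,u_t) over input sequences u = (u_0,…,u_{t_f}) subject to x_{t+1} = f(x_t,u_t), u_t ≤ u_max, and h(x_t,u_t) ≤ y_max componentwise for all t. Assume: (A1) L : ℝ^n × ℝ → ℝ is continuous and increasing in (x,u); (A2) f : ℝ^n × ℝ → ℝ^n is continuous, and monotone on R̄(x₀,t_f) × (−∞,u_max]; (A3) each component h_i is continuous on ℝ^n × (−∞,u_max] and strictly increasing in u for every x ∈ R̄(x₀,t_f). If an optimal solution exists, then there exists an optimal solution u* that cannot be increased at any single time: for every τ ∈ {0,…,t_f} and every ε > 0, the input sequence û defined by û_τ = u*_τ + ε and û_t = u*_t for t ≠ τ is infeasible. -/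
/-!
A feasible increase of the input can only increase the state, hence the cost, so raising an
optimal input keeps it optimal as long as it stays feasible. By continuity the optimal inputs
form a closed set; squeezed between a given optimal input `u₀` and `max u₀ u_max` they form a
compact set, on which the sum of the inputs over `0,…,t_f` attains its maximum. An optimal input attaining it
cannot be raised at any time.
-/

open Finset Set

/-- Trajectory of `x_{t+1} = f(x_t,u_t)` from `x₀` under input sequence `u`. -/
noncomputable def traj {n : ℕ} (f : (Fin n → ℝ) → ℝ → (Fin n → ℝ)) (x₀ : Fin n → ℝ)
    (u : ℕ → ℝ) : ℕ → (Fin n → ℝ)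
  | 0 => x₀
  | t + 1 => f (traj f x₀ u t) (u t)

/-- An input sequence is feasible if `u_t ≤ u_max` and `h(x_t,u_t) ≤ y_max`
componentwise for all `t ∈ {0,…,t_f}`. -/
def Feasible {n p : ℕ} (f : (Fin n → ℝ) → ℝ → (Fin n → ℝ))
    (h : (Fin n → ℝ) → ℝ → (Fin p → ℝ)) (x₀ : Fin n → ℝ)
    (umax : ℝ) (ymax : Fin p → ℝ) (tf : ℕ) (u : ℕ → ℝ) : Prop :=
  ∀ t ≤ tf, u t ≤ umax ∧ ∀ i, h (traj f x₀ u t) (u t) i ≤ ymax i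

/-- The total cost `J(x₀,u) = ∑_{t=0}^{t_f} L(x_t,u_t)`. -/
noncomputable def Cost {n : ℕ} (f : (Fin n → ℝ) → ℝ → (Fin n → ℝ))
    (L : (Fin n → ℝ) → ℝ → ℝ) (x₀ : Fin n → ℝ) (tf : ℕ) (u : ℕ → ℝ) : ℝ :=
  ∑ t ∈ Finset.range (tf + 1), L (traj f x₀ u t) (u t)

/-- `u` is optimal if it is feasible and its cost dominates that of every feasible sequence. -/
def Optimal {n p : ℕ} (f : (Fin n → ℝ) → ℝ → (Fin n → ℝ))
    (h : (Fin n → ℝ) → ℝ → (Fin p → ℝ)) (L : (Fin n → ℝ) → ℝ → ℝ)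
    (x₀ : Fin n → ℝ) (umax : ℝ) (ymax : Fin p → ℝ) (tf : ℕ) (u : ℕ → ℝ) : Prop :=
  Feasible f h x₀ umax ymax tf u ∧
    ∀ v, Feasible f h x₀ umax ymax tf v → Cost f L x₀ tf v ≤ Cost f L x₀ tf u

/-- `R̄(x₀,t_f)`: all states visited at some time `t ≤ t_f` by some feasible trajectory. -/
def Reach {n p : ℕ} (f : (Fin n → ℝ) → ℝ → (Fin n → ℝ))
    (h : (Fin n → ℝ) → ℝ → (Fin p → ℝ)) (x₀ : Fin n → ℝ)
    (umax : ℝ) (ymax : Fin p → ℝ) (tf : ℕ) : Set (Fin n → ℝ) :=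
  {z | ∃ u, Feasible f h x₀ umax ymax tf u ∧ ∃ t ≤ tf, traj f x₀ u t = z}

section

variable {n p : ℕ} {f : (Fin n → ℝ) → ℝ → (Fin n → ℝ)} {h : (Fin n → ℝ) → ℝ → (Fin p → ℝ)}
  {L : (Fin n → ℝ) → ℝ → ℝ} {x₀ : Fin n → ℝ} {umax : ℝ} {ymax : Fin p → ℝ} {tf : ℕ}
  {u v : ℕ → ℝ}

theorem traj_mono
    (hf : MonotoneOn (Function.uncurry f) (Reach f h x₀ umax ymax tf ×ˢ Iic umax))
    (hu : Feasible f h x₀ umax ymax tf u) (hv : Feasible f h x₀ umax ymax tf v)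
    (huv : ∀ t ≤ tf, u t ≤ v t) : ∀ t ≤ tf, traj f x₀ u t ≤ traj f x₀ v t
  | 0, _ => le_rfl
  | t + 1, ht =>
    hf (a := (traj f x₀ u t, u t)) ⟨⟨u, hu, t, by omega, rfl⟩, (hu t (by omega)).1⟩
      (b := (traj f x₀ v t, v t)) ⟨⟨v, hv, t, by omega, rfl⟩, (hv t (by omega)).1⟩
      (Prod.mk_le_mk.mpr ⟨traj_mono hf hu hv huv t (by omega), huv t (by omega)⟩)

theorem cost_mono (hL : Monotone (Function.uncurry L))
    (hf : MonotoneOn (Function.uncurry f) (Reach f h x₀ umax ymax tf ×ˢ Iic umax))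
    (hu : Feasible f h x₀ umax ymax tf u) (hv : Feasible f h x₀ umax ymax tf v)
    (huv : ∀ t ≤ tf, u t ≤ v t) : Cost f L x₀ tf u ≤ Cost f L x₀ tf v :=
  sum_le_sum fun t ht =>
    have ht : t ≤ tf := Nat.lt_succ_iff.mp (mem_range.mp ht)
    hL (Prod.mk_le_mk.mpr ⟨traj_mono hf hu hv huv t ht, huv t ht⟩)

theorem Optimal.of_feasible_of_le (hL : Monotone (Function.uncurry L))
    (hf : MonotoneOn (Function.uncurry f) (Reach f h x₀ umax ymax tf ×ˢ Iic umax))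
    (hu : Optimal f h L x₀ umax ymax tf u) (hv : Feasible f h x₀ umax ymax tf v)
    (huv : ∀ t ≤ tf, u t ≤ v t) : Optimal f h L x₀ umax ymax tf v :=
  ⟨hv, fun w hw => (hu.2 w hw).trans (cost_mono hL hf hu.1 hv huv)⟩

theorem continuous_traj (hf : Continuous (Function.uncurry f)) :
    ∀ t, Continuous fun u : ℕ → ℝ => traj f x₀ u t
  | 0 => continuous_const
  | t + 1 => hf.comp ((continuous_traj hf t).prodMk (continuous_apply t))

theorem continuous_cost (hL : Continuous (Function.uncurry L))
    (hf : Continuous (Function.uncurry f)) : Continuous (Cost f L x₀ tf) :=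
  continuous_finsetSum _ fun t _ => hL.comp ((continuous_traj hf t).prodMk (continuous_apply t))

theorem isClosed_setOf_feasible (hf : Continuous (Function.uncurry f))
    (hh : ∀ i, ContinuousOn (fun q : (Fin n → ℝ) × ℝ => h q.1 q.2 i) (univ ×ˢ Iic umax)) :
    IsClosed {u | Feasible f h x₀ umax ymax tf u} := by
  have hbound (t : ℕ) : IsClosed {u : ℕ → ℝ | u t ≤ umax} :=
    isClosed_le (continuous_apply t) continuous_const
  have houtput (t : ℕ) (i : Fin p) :
      IsClosed ({u : ℕ → ℝ | u t ≤ umax} ∩ {u | h (traj f x₀ u t) (u t) i ≤ ymax i}) :=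
    ((hh i).comp ((continuous_traj hf t).prodMk (continuous_apply t)).continuousOn
      fun _ hu => ⟨mem_univ _, hu⟩).preimage_isClosed_of_isClosed (hbound t) isClosed_Iic
  convert isClosed_biInter fun t (_ : t ∈ Set.Iic tf) =>
    (hbound t).inter (isClosed_iInter (houtput t)) using 1
  ext u
  simp only [Feasible, mem_ofPred_eq, mem_iInter, mem_inter_iff, Set.mem_Iic]
  grind

theorem isClosed_setOf_optimal (hL : Continuous (Function.uncurry L))
    (hf : Continuous (Function.uncurry f))
    (hh : ∀ i, ContinuousOn (fun q : (Fin n → ℝ) × ℝ => h q.1 q.2 i) (univ ×ˢ Iic umax)) :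
    IsClosed {u | Optimal f h L x₀ umax ymax tf u} := by
  rcases em (∃ u₀, Optimal f h L x₀ umax ymax tf u₀) with ⟨u₀, hu₀⟩ | hnone
  · have hchar : {u | Optimal f h L x₀ umax ymax tf u} =
        {u | Feasible f h x₀ umax ymax tf u} ∩ {u | Cost f L x₀ tf u₀ ≤ Cost f L x₀ tf u} := by
      ext u
      exact ⟨fun hu => ⟨hu.1, hu.2 u₀ hu₀.1⟩,
        fun hu => ⟨hu.1, fun w hw => (hu₀.2 w hw).trans hu.2⟩⟩
    rw [hchar]
    exact (isClosed_setOf_feasible hf hh).inter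
      (isClosed_le continuous_const (continuous_cost hL hf))
  · convert isClosed_empty
    exact eq_empty_of_forall_notMem fun u hu => hnone ⟨u, hu⟩

theorem exists_optimal_maximal (hL : Continuous (Function.uncurry L))
    (hf : Continuous (Function.uncurry f))
    (hh : ∀ i, ContinuousOn (fun q : (Fin n → ℝ) × ℝ => h q.1 q.2 i) (univ ×ˢ Iic umax))
    (hex : ∃ u, Optimal f h L x₀ umax ymax tf u) :
    ∃ m, Optimal f h L x₀ umax ymax tf m ∧ ∀ v, Optimal f h L x₀ umax ymax tf v →
      m ≤ v → (∀ t, tf < t → v t = m t) → v = m := by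
  obtain ⟨u₀, hu₀⟩ := hex
  -- Inputs after `tf` are unconstrained, hence the upper bound `u₀ ⊔ umax` rather than `umax`.
  set K := Icc u₀ (u₀ ⊔ fun _ => umax) ∩ {u | Optimal f h L x₀ umax ymax tf u}
  have hK : IsCompact K := isCompact_Icc.inter_right (isClosed_setOf_optimal hL hf hh)
  obtain ⟨m, ⟨⟨hu₀m, hmbound⟩, hm⟩, hmax⟩ := hK.exists_isMaxOn ⟨u₀, ⟨le_rfl, le_sup_left⟩, hu₀⟩
    (continuous_finsetSum (range (tf + 1)) fun t _ => continuous_apply t).continuousOn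
  refine ⟨m, hm, fun v hv hmv hvm => ?_⟩
  have hvK : v ∈ K := by
    refine ⟨⟨hu₀m.trans hmv, fun t => ?_⟩, hv⟩
    rcases le_or_gt t tf with ht | ht
    · exact (hv.1 t ht).1.trans le_sup_right
    · exact (hvm t ht).le.trans (hmbound t)
  have hsum : ∑ t ∈ range (tf + 1), m t = ∑ t ∈ range (tf + 1), v t :=
    (sum_le_sum fun t _ => hmv t).antisymm (hmax hvK)
  have hagree := (sum_eq_sum_iff_of_le fun t _ => hmv t).mp hsum
  funext t
  rcases le_or_gt t tf with ht | ht
  · exact (hagree t (mem_range.mpr (by omega))).symm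
  · exact hvm t ht

end

theorem exists_optimal_not_increasable_general {n p tf : ℕ}
    (f : (Fin n → ℝ) → ℝ → (Fin n → ℝ))
    (h : (Fin n → ℝ) → ℝ → (Fin p → ℝ))
    (L : (Fin n → ℝ) → ℝ → ℝ)
    (x₀ : Fin n → ℝ) (umax : ℝ) (ymax : Fin p → ℝ)
    -- (A1) monotone cost
    (hLcont : Continuous fun q : (Fin n → ℝ) × ℝ => L q.1 q.2)
    (hLmono : ∀ (x₁ x₂ : Fin n → ℝ) (u₁ u₂ : ℝ), x₂ ≤ x₁ → u₂ ≤ u₁ → L x₂ u₂ ≤ L x₁ u₁)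
    -- (A2) monotone system
    (hfcont : Continuous fun q : (Fin n → ℝ) × ℝ => f q.1 q.2)
    (hfmono : ∀ x₁ x₂ : Fin n → ℝ, x₁ ∈ Reach f h x₀ umax ymax tf →
      x₂ ∈ Reach f h x₀ umax ymax tf → ∀ u₁ u₂ : ℝ, u₁ ≤ umax → u₂ ≤ umax →
      x₂ ≤ x₁ → u₂ ≤ u₁ → f x₂ u₂ ≤ f x₁ u₁)
    -- (A3) monotone constraint
    (hhcont : ∀ i, ContinuousOn (fun q : (Fin n → ℝ) × ℝ => h q.1 q.2 i)
      (Set.univ ×ˢ Set.Iic umax))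
    -- an optimal solution exists
    (hex : ∃ u, Optimal f h L x₀ umax ymax tf u) :
    ∃ ustar, Optimal f h L x₀ umax ymax tf ustar ∧
      ∀ τ ≤ tf, ∀ ε > (0 : ℝ),
        ¬ Feasible f h x₀ umax ymax tf (Function.update ustar τ (ustar τ + ε)) := by
  have hL : Monotone (Function.uncurry L) := fun _ _ hq => hLmono _ _ _ _ hq.1 hq.2
  have hf : MonotoneOn (Function.uncurry f) (Reach f h x₀ umax ymax tf ×ˢ Iic umax) :=
    fun _ hq₁ _ hq₂ hq => hfmono _ _ hq₂.1 hq₁.1 _ _ hq₂.2 hq₁.2 hq.1 hq.2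
  obtain ⟨m, hm, hmax⟩ := exists_optimal_maximal hLcont hfcont hhcont hex
  refine ⟨m, hm, fun τ hτ ε hε hfeas => ?_⟩
  have hmv : m ≤ Function.update m τ (m τ + ε) :=
    le_update_iff.mpr ⟨by linarith, fun _ _ => le_rfl⟩
  have hv := hmax _ (hm.of_feasible_of_le hL hf hfeas fun t _ => hmv t) hmv
    fun t ht => Function.update_of_ne (by omega) _ _
  have hraised : m τ + ε = m τ := by simpa using congrFun hv τ
  linarith

/-- Lemma 1, part 1: under the monotonicity assumptions, there is an optimal
solution that cannot be increased at any single time instant. -/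
theorem exists_optimal_not_increasable {n p tf : ℕ}
    (f : (Fin n → ℝ) → ℝ → (Fin n → ℝ))
    (h : (Fin n → ℝ) → ℝ → (Fin p → ℝ))
    (L : (Fin n → ℝ) → ℝ → ℝ)
    (x₀ : Fin n → ℝ) (umax : ℝ) (ymax : Fin p → ℝ)
    -- (A1) monotone cost
    (hLcont : Continuous fun q : (Fin n → ℝ) × ℝ => L q.1 q.2)
    (hLmono : ∀ (x₁ x₂ : Fin n → ℝ) (u₁ u₂ : ℝ), x₂ ≤ x₁ → u₂ ≤ u₁ → L x₂ u₂ ≤ L x₁ u₁)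
    -- (A2) monotone system
    (hfcont : Continuous fun q : (Fin n → ℝ) × ℝ => f q.1 q.2)
    (hfmono : ∀ x₁ x₂ : Fin n → ℝ, x₁ ∈ Reach f h x₀ umax ymax tf →
      x₂ ∈ Reach f h x₀ umax ymax tf → ∀ u₁ u₂ : ℝ, u₁ ≤ umax → u₂ ≤ umax →
      x₂ ≤ x₁ → u₂ ≤ u₁ → f x₂ u₂ ≤ f x₁ u₁)
    -- (A3) monotone constraint
    (hhcont : ∀ i, ContinuousOn (fun q : (Fin n → ℝ) × ℝ => h q.1 q.2 i)
      (Set.univ ×ˢ Set.Iic umax))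
    (hhmono : ∀ x ∈ Reach f h x₀ umax ymax tf, ∀ i, StrictMono fun v => h x v i)
    -- an optimal solution exists
    (hex : ∃ u, Optimal f h L x₀ umax ymax tf u) :
    ∃ ustar, Optimal f h L x₀ umax ymax tf ustar ∧
      ∀ τ ≤ tf, ∀ ε > (0 : ℝ),
        ¬ Feasible f h x₀ umax ymax tf (Function.update ustar τ (ustar τ + ε)) :=
  exists_optimal_not_increasable_general f h L x₀ umax ymax hLcont hLmono hfcont hfmono hhcont hex
end

section
/- (Lemma 1, part 2.) Consider the constrained optimal control problem: maximize J(x₀,u) = ∑_{t=0}^{t_f} L(x_t,u_t) over input sequences subject to x_{t+1} = f(x_t,u_t), u_t ≤ u_max, and h(x_t,u_t) ≤ y_max for all t. Assume: (A1) L is continuous and increasing in (x,u); (A2) f is continuous and monotone on R̄(x₀,t_f) × (−∞,u_max]; (A3) each h_i is continuous on ℝ^n × (−∞,u_max] and strictly increasing in u for every x ∈ R̄(x₀,t_f). If an optimal solution exists, then there exists an optimal solution u* with trajectory x* under which at least one inequality constraint is active at the final time: either u*_{t_f} = u_max, or h_i(x*_{t_f}, u*_{t_f}) = (y_max)_i for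 some i ∈ {1,…,p}. -/
open Finset Set

/-! Raising the final input of an optimal solution leaves the trajectory up to the final time
unchanged and does not decrease the cost, because `L` is increasing in `u`. Raise it as far as
the constraints allow: the set of admissible final inputs is compact, and at its maximum some
constraint is active, since otherwise continuity would allow a slightly larger input. -/

open Filter Topology

theorem exists_ge_with_active_constraint {ι : Type*} [Finite ι] {g : ι → ℝ → ℝ}
    {a b : ℝ} {c : ι → ℝ} (hg : ∀ i, ContinuousOn (g i) (Iic b)) (hab : a ≤ b)
    (ha : ∀ i, g i a ≤ c i) :
    ∃ v, a ≤ v ∧ v ≤ b ∧ (∀ i, g i v ≤ c i) ∧ (v = b ∨ ∃ i, g i v = c i) := by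
  -- the outer `Icc a b` keeps `S` compact when `ι` is empty
  set S := Icc a b ∩ ⋂ i, Icc a b ∩ g i ⁻¹' Iic (c i)
  have hS : IsCompact S := isCompact_Icc.inter_right <| isClosed_iInter fun i =>
    ((hg i).mono Icc_subset_Iic_self).preimage_isClosed_of_isClosed isClosed_Icc isClosed_Iic
  have haS : a ∈ S := ⟨⟨le_rfl, hab⟩, mem_iInter.2 fun i => ⟨⟨le_rfl, hab⟩, ha i⟩⟩
  obtain ⟨v, ⟨⟨hav, hvb⟩, hvg⟩, hmax⟩ := hS.exists_isGreatest ⟨a, haS⟩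
  have hvc : ∀ i, g i v ≤ c i := fun i => (mem_iInter.1 hvg i).2
  refine ⟨v, hav, hvb, hvc, ?_⟩
  by_contra! hinactive
  have hvb' : v < b := lt_of_le_of_ne hvb hinactive.1
  have hvc' : ∀ i, g i v < c i := fun i => lt_of_le_of_ne (hvc i) (hinactive.2 i)
  have hnear : ∀ᶠ w in 𝓝 v, w ≤ b ∧ ∀ i, g i w < c i :=
    (eventually_le_nhds hvb').and <| Filter.eventually_all.2 fun i =>
      ((hg i).continuousAt (Iic_mem_nhds hvb')).eventually_lt_const (hvc' i)
  have hright : ∀ᶠ w in 𝓝[>] v, (w ≤ b ∧ ∀ i, g i w < c i) ∧ v < w :=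
    (hnear.filter_mono nhdsWithin_le_nhds).and self_mem_nhdsWithin
  obtain ⟨w, ⟨hwb, hwc⟩, hvw⟩ := hright.exists
  have hwS : w ∈ S := ⟨⟨hav.trans hvw.le, hwb⟩,
    mem_iInter.2 fun i => ⟨⟨hav.trans hvw.le, hwb⟩, (hwc i).le⟩⟩
  exact (hmax hwS).not_gt hvw

section

variable {n p : ℕ} (f : (Fin n → ℝ) → ℝ → (Fin n → ℝ)) (x₀ : Fin n → ℝ)

theorem traj_update_of_le (u : ℕ → ℝ) {s : ℕ} (a : ℝ) :
    ∀ t ≤ s, traj f x₀ (Function.update u s a) t = traj f x₀ u t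
  | 0, _ => rfl
  | t + 1, ht => by
    rw [traj, traj, traj_update_of_le u a t (by omega),
      Function.update_of_ne (by omega : t ≠ s)]

theorem Feasible.update_final {h : (Fin n → ℝ) → ℝ → (Fin p → ℝ)} {umax : ℝ}
    {ymax : Fin p → ℝ} {tf : ℕ} {u : ℕ → ℝ} (hu : Feasible f h x₀ umax ymax tf u) {a : ℝ}
    (ha : a ≤ umax) (hah : ∀ i, h (traj f x₀ u tf) a i ≤ ymax i) :
    Feasible f h x₀ umax ymax tf (Function.update u tf a) := by
  intro t ht
  rw [traj_update_of_le f x₀ u a t ht]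
  rcases ht.eq_or_lt with rfl | hlt
  · rw [Function.update_self]
    exact ⟨ha, hah⟩
  · rw [Function.update_of_ne hlt.ne]
    exact hu t ht

theorem cost_le_cost_update_final {L : (Fin n → ℝ) → ℝ → ℝ} (hL : ∀ x, Monotone (L x))
    {tf : ℕ} {u : ℕ → ℝ} {a : ℝ} (ha : u tf ≤ a) :
    Cost f L x₀ tf u ≤ Cost f L x₀ tf (Function.update u tf a) := by
  unfold Cost
  rw [sum_range_succ, sum_range_succ, Function.update_self, traj_update_of_le f x₀ u a tf le_rfl]
  gcongr with t ht
  · rw [traj_update_of_le f x₀ u a t (mem_range.1 ht).le,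
      Function.update_of_ne (mem_range.1 ht).ne]
  · exact hL _ ha

end

theorem exists_optimal_active_constraint_at_final_time_general {n p tf : ℕ}
    (f : (Fin n → ℝ) → ℝ → (Fin n → ℝ))
    (h : (Fin n → ℝ) → ℝ → (Fin p → ℝ))
    (L : (Fin n → ℝ) → ℝ → ℝ)
    (x₀ : Fin n → ℝ) (umax : ℝ) (ymax : Fin p → ℝ)
    -- (A1) monotone cost
    (hLmono : ∀ (x₁ x₂ : Fin n → ℝ) (u₁ u₂ : ℝ), x₂ ≤ x₁ → u₂ ≤ u₁ → L x₂ u₂ ≤ L x₁ u₁)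
    -- (A3) monotone constraint
    (hhcont : ∀ i, ContinuousOn (fun q : (Fin n → ℝ) × ℝ => h q.1 q.2 i)
      (Set.univ ×ˢ Set.Iic umax))
    -- an optimal solution exists
    (hex : ∃ u, Optimal f h L x₀ umax ymax tf u) :
    ∃ ustar, Optimal f h L x₀ umax ymax tf ustar ∧
      (ustar tf = umax ∨ ∃ i, h (traj f x₀ ustar tf) (ustar tf) i = ymax i) := by
  obtain ⟨u, hfeas, hopt⟩ := hex
  obtain ⟨v, huv, hv, hvy, hactive⟩ := exists_ge_with_active_constraint
    (g := fun i v => h (traj f x₀ u tf) v i)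
    (fun i => (hhcont i).comp (Continuous.prodMk_right _).continuousOn fun _ hv => ⟨trivial, hv⟩)
    (hfeas tf le_rfl).1 (hfeas tf le_rfl).2
  have hLu : ∀ x, Monotone (L x) := fun x _ _ hab => hLmono x x _ _ le_rfl hab
  refine ⟨Function.update u tf v, ⟨hfeas.update_final f x₀ hv hvy, fun w hw =>
    (hopt w hw).trans (cost_le_cost_update_final f x₀ hLu huv)⟩, ?_⟩
  rwa [Function.update_self, traj_update_of_le f x₀ u v tf le_rfl]

/-- Lemma 1, part 2: under the monotonicity assumptions, there is an optimal
solution under which at least one inequality constraint is active at the final time. -/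
theorem exists_optimal_active_constraint_at_final_time {n p tf : ℕ}
    (f : (Fin n → ℝ) → ℝ → (Fin n → ℝ))
    (h : (Fin n → ℝ) → ℝ → (Fin p → ℝ))
    (L : (Fin n → ℝ) → ℝ → ℝ)
    (x₀ : Fin n → ℝ) (umax : ℝ) (ymax : Fin p → ℝ)
    -- (A1) monotone cost
    (hLcont : Continuous fun q : (Fin n → ℝ) × ℝ => L q.1 q.2)
    (hLmono : ∀ (x₁ x₂ : Fin n → ℝ) (u₁ u₂ : ℝ), x₂ ≤ x₁ → u₂ ≤ u₁ → L x₂ u₂ ≤ L x₁ u₁)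
    -- (A2) monotone system
    (hfcont : Continuous fun q : (Fin n → ℝ) × ℝ => f q.1 q.2)
    (hfmono : ∀ x₁ x₂ : Fin n → ℝ, x₁ ∈ Reach f h x₀ umax ymax tf →
      x₂ ∈ Reach f h x₀ umax ymax tf → ∀ u₁ u₂ : ℝ, u₁ ≤ umax → u₂ ≤ umax →
      x₂ ≤ x₁ → u₂ ≤ u₁ → f x₂ u₂ ≤ f x₁ u₁)
    -- (A3) monotone constraint
    (hhcont : ∀ i, ContinuousOn (fun q : (Fin n → ℝ) × ℝ => h q.1 q.2 i)
      (Set.univ ×ˢ Set.Iic umax))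
    (hhmono : ∀ x ∈ Reach f h x₀ umax ymax tf, ∀ i, StrictMono fun v => h x v i)
    -- an optimal solution exists
    (hex : ∃ u, Optimal f h L x₀ umax ymax tf u) :
    ∃ ustar, Optimal f h L x₀ umax ymax tf ustar ∧
      (ustar tf = umax ∨ ∃ i, h (traj f x₀ ustar tf) (ustar tf) i = ymax i) :=
  exists_optimal_active_constraint_at_final_time_general f h L x₀ umax ymax hLmono hhcont hex
end

section
/- (Theorem 2.) Consider the constrained optimal control problem: maximize J(x₀,u) = ∑_{t=0}^{t_f} L(x_t,u_t) subject to x_{t+1} = f(x_t,u_t), u_t ≤ u_max, and h(x_t,u_t) ≤ y_max for all t. Assume: (A1) L is continuous and increasing in (x,u); (A2) f is continuous and monotone (with nonnegative partial derivatives) on R̄(x₀,t_f) × (−∞,u_max]; (A3) each h_i is continuous in x and strictly increasing in u; additionally, h is differentiable, h(x,u) is decreasing in x (each ∂h_i/∂x_j ≤ 0), and ∂h_i(x,u)/∂u > 0 for all x ∈ R̄(x₀,t_f), u ∈ (−∞,u_max], and all i. If an optimal solution exists, then there is an optimal solution u* with trajectory x* that makes at least one inequality constraint active at every time step: for every t ∈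 {0,…,t_f}, either u*_t = u_max or h_i(x*_t,u*_t) = (y_max)_i for some i ∈ {1,…,p}. (Such a solution is called bang-ride.) -/
open Finset Set

open Filter

lemma traj_zero {n : ℕ} (f : (Fin n → ℝ) → ℝ → (Fin n → ℝ)) (x₀ : Fin n → ℝ) (u : ℕ → ℝ) :
    traj f x₀ u 0 = x₀ := rfl

lemma traj_succ {n : ℕ} (f : (Fin n → ℝ) → ℝ → (Fin n → ℝ)) (x₀ : Fin n → ℝ) (u : ℕ → ℝ)
    (t : ℕ) : traj f x₀ u (t + 1) = f (traj f x₀ u t) (u t) := rfl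

lemma traj_congr {n : ℕ} (f : (Fin n → ℝ) → ℝ → (Fin n → ℝ)) (x₀ : Fin n → ℝ)
    (u v : ℕ → ℝ) : ∀ t : ℕ, (∀ s < t, u s = v s) → traj f x₀ u t = traj f x₀ v t := by
  intro t
  induction t with
  | zero => intro _; rfl
  | succ s ih =>
    intro hagree
    rw [traj_succ, traj_succ, ih fun r hr => hagree r (hr.trans s.lt_succ_self),
      hagree s s.lt_succ_self]

lemma traj_update_cont {n : ℕ} {f : (Fin n → ℝ) → ℝ → (Fin n → ℝ)} (x₀ : Fin n → ℝ)
    (hfcont : Continuous fun q : (Fin n → ℝ) × ℝ => f q.1 q.2)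
    (τ : ℕ → ℝ) (r : ℕ) :
    ∀ s : ℕ, Continuous fun d : ℝ => traj f x₀ (Function.update τ r d) s := by
  intro s
  induction s with
  | zero => exact continuous_const
  | succ s ih =>
    have hrw : (fun d : ℝ => traj f x₀ (Function.update τ r d) (s + 1))
        = fun d : ℝ => f (traj f x₀ (Function.update τ r d) s) (Function.update τ r d s) := rfl
    rw [hrw]
    by_cases hs : s = r
    · subst hs
      simp only [Function.update_self]
      exact hfcont.comp (ih.prodMk continuous_id)
    · simp only [Function.update_of_ne hs]
      exact hfcont.comp (ih.prodMk continuous_const)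

/-- The admissible-input set at a state. -/
def Sset {n p : ℕ} (h : (Fin n → ℝ) → ℝ → (Fin p → ℝ)) (umax : ℝ) (ymax : Fin p → ℝ)
    (ξ : Fin n → ℝ) : Set ℝ := {v | v ≤ umax ∧ ∀ i, h ξ v i ≤ ymax i}

/-- The greedy (maximal admissible) input at a state. -/
noncomputable def bIn {n p : ℕ} (h : (Fin n → ℝ) → ℝ → (Fin p → ℝ)) (umax : ℝ)
    (ymax : Fin p → ℝ) (ξ : Fin n → ℝ) : ℝ := sSup (Sset h umax ymax ξ)

lemma Sset_bddAbove {n p : ℕ} (h : (Fin n → ℝ) → ℝ → (Fin p → ℝ)) (umax : ℝ)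
    (ymax : Fin p → ℝ) (ξ : Fin n → ℝ) : BddAbove (Sset h umax ymax ξ) :=
  ⟨umax, fun _ hv => hv.1⟩

lemma Sset_closed {n p : ℕ} {h : (Fin n → ℝ) → ℝ → (Fin p → ℝ)} {umax : ℝ}
    {ymax : Fin p → ℝ} (hhcu : ∀ i, Continuous fun q : (Fin n → ℝ) × ℝ => h q.1 q.2 i)
    (ξ : Fin n → ℝ) : IsClosed (Sset h umax ymax ξ) := by
  have hrw : Sset h umax ymax ξ = {v : ℝ | v ≤ umax} ∩ ⋂ i, {v : ℝ | h ξ v i ≤ ymax i} := by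
    ext v; simp [Sset, Set.mem_iInter]
  rw [hrw]
  refine (isClosed_le continuous_id continuous_const).inter (isClosed_iInter fun i => ?_)
  exact isClosed_le ((hhcu i).comp (continuous_const.prodMk continuous_id)) continuous_const

lemma bIn_ub {n p : ℕ} {h : (Fin n → ℝ) → ℝ → (Fin p → ℝ)} {umax : ℝ} {ymax : Fin p → ℝ}
    {ξ : Fin n → ℝ} {v : ℝ} (hv : v ∈ Sset h umax ymax ξ) : v ≤ bIn h umax ymax ξ :=
  le_csSup (Sset_bddAbove h umax ymax ξ) hv

lemma bIn_mem {n p : ℕ} {h : (Fin n → ℝ) → ℝ → (Fin p → ℝ)} {umax : ℝ} {ymax : Fin p → ℝ}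
    (hhcu : ∀ i, Continuous fun q : (Fin n → ℝ) × ℝ => h q.1 q.2 i)
    {ξ : Fin n → ℝ} (hne : (Sset h umax ymax ξ).Nonempty) :
    bIn h umax ymax ξ ∈ Sset h umax ymax ξ :=
  (Sset_closed hhcu ξ).csSup_mem hne (Sset_bddAbove h umax ymax ξ)

lemma Sset_mono {n p : ℕ} {h : (Fin n → ℝ) → ℝ → (Fin p → ℝ)} {umax : ℝ} {ymax : Fin p → ℝ}
    (hhdecx : ∀ (x₁ x₂ : Fin n → ℝ) (u : ℝ), x₂ ≤ x₁ → ∀ i, h x₁ u i ≤ h x₂ u i)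
    {ξ ξ' : Fin n → ℝ} (hle : ξ ≤ ξ') : Sset h umax ymax ξ ⊆ Sset h umax ymax ξ' :=
  fun v hv => ⟨hv.1, fun i => (hhdecx ξ' ξ v hle i).trans (hv.2 i)⟩

lemma bIn_mono {n p : ℕ} {h : (Fin n → ℝ) → ℝ → (Fin p → ℝ)} {umax : ℝ} {ymax : Fin p → ℝ}
    (hhdecx : ∀ (x₁ x₂ : Fin n → ℝ) (u : ℝ), x₂ ≤ x₁ → ∀ i, h x₁ u i ≤ h x₂ u i)
    {ξ ξ' : Fin n → ℝ} (hne : (Sset h umax ymax ξ).Nonempty) (hle : ξ ≤ ξ') :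
    bIn h umax ymax ξ ≤ bIn h umax ymax ξ' :=
  csSup_le_csSup (Sset_bddAbove h umax ymax ξ') hne (Sset_mono hhdecx hle)

lemma bIn_active {n p : ℕ} {h : (Fin n → ℝ) → ℝ → (Fin p → ℝ)} {umax : ℝ} {ymax : Fin p → ℝ}
    (hhcu : ∀ i, Continuous fun q : (Fin n → ℝ) × ℝ => h q.1 q.2 i)
    {ξ : Fin n → ℝ} (hne : (Sset h umax ymax ξ).Nonempty) :
    bIn h umax ymax ξ = umax ∨ ∃ i, h ξ (bIn h umax ymax ξ) i = ymax i := by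
  by_contra hcon
  push_neg at hcon
  obtain ⟨hne_umax, hnotight⟩ := hcon
  have hmem := bIn_mem hhcu hne
  have hlt : bIn h umax ymax ξ < umax := lt_of_le_of_ne hmem.1 hne_umax
  have hlti : ∀ i, h ξ (bIn h umax ymax ξ) i < ymax i :=
    fun i => lt_of_le_of_ne (hmem.2 i) (hnotight i)
  have hopen : IsOpen {v : ℝ | v < umax ∧ ∀ i, h ξ v i < ymax i} := by
    have h1 : IsOpen {v : ℝ | v < umax} := isOpen_lt continuous_id continuous_const
    have h2 : IsOpen {v : ℝ | ∀ i, h ξ v i < ymax i} := by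
      have hrw : {v : ℝ | ∀ i, h ξ v i < ymax i} = ⋂ i, {v : ℝ | h ξ v i < ymax i} := by
        ext v; simp [Set.mem_iInter]
      rw [hrw]
      exact isOpen_iInter_of_finite fun i =>
        isOpen_lt ((hhcu i).comp (continuous_const.prodMk continuous_id)) continuous_const
    have hrw2 : {v : ℝ | v < umax ∧ ∀ i, h ξ v i < ymax i}
        = {v : ℝ | v < umax} ∩ {v : ℝ | ∀ i, h ξ v i < ymax i} := rfl
    rw [hrw2]; exact h1.inter h2
  obtain ⟨ε, hε, hball⟩ := Metric.isOpen_iff.1 hopen _ ⟨hlt, hlti⟩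
  have hmem2 : bIn h umax ymax ξ + ε / 2 ∈ {v : ℝ | v < umax ∧ ∀ i, h ξ v i < ymax i} := by
    apply hball
    rw [Metric.mem_ball, Real.dist_eq, add_sub_cancel_left, abs_of_pos (by linarith)]
    linarith
  have hS : bIn h umax ymax ξ + ε / 2 ∈ Sset h umax ymax ξ :=
    ⟨le_of_lt hmem2.1, fun i => le_of_lt (hmem2.2 i)⟩
  have := bIn_ub hS
  linarith

section BangRideAux

variable {n p tf : ℕ} {f : (Fin n → ℝ) → ℝ → (Fin n → ℝ)}
  {h : (Fin n → ℝ) → ℝ → (Fin p → ℝ)} {x₀ : Fin n → ℝ} {umax : ℝ} {ymax : Fin p → ℝ}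

lemma nb_last (w : ℕ → ℝ) (hw : Feasible f h x₀ umax ymax tf w) (ν : ℝ)
    (h2 : ν ≤ umax) (h3 : ∀ i, h (traj f x₀ w tf) ν i ≤ ymax i) :
    ∃ w', Feasible f h x₀ umax ymax tf w' ∧ (∀ s < tf, w' s = w s) ∧ w' tf = ν := by
  refine ⟨Function.update w tf ν, ?_, fun s hs => Function.update_of_ne (by omega) _ _,
    Function.update_self _ _ _⟩
  intro s hs
  have htr : traj f x₀ (Function.update w tf ν) s = traj f x₀ w s :=
    traj_congr f x₀ _ _ s fun r hr => Function.update_of_ne (by omega) _ _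
  rcases eq_or_lt_of_le hs with heq | hlt
  · subst heq; rw [htr, Function.update_self]; exact ⟨h2, h3⟩
  · rw [htr, Function.update_of_ne (by omega)]; exact hw s hs

lemma nb
    (hfcont : Continuous fun q : (Fin n → ℝ) × ℝ => f q.1 q.2)
    (hfmono : ∀ x₁ x₂ : Fin n → ℝ, x₁ ∈ Reach f h x₀ umax ymax tf →
      x₂ ∈ Reach f h x₀ umax ymax tf → ∀ u₁ u₂ : ℝ, u₁ ≤ umax → u₂ ≤ umax →
      x₂ ≤ x₁ → u₂ ≤ u₁ → f x₂ u₂ ≤ f x₁ u₁)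
    (hhmono : ∀ x ∈ Reach f h x₀ umax ymax tf, ∀ i, StrictMono fun v => h x v i)
    (hhdiff : ∀ i, Differentiable ℝ fun q : (Fin n → ℝ) × ℝ => h q.1 q.2 i)
    (hhdecx : ∀ (x₁ x₂ : Fin n → ℝ) (u : ℝ), x₂ ≤ x₁ → ∀ i, h x₁ u i ≤ h x₂ u i) :
    ∀ K t, t ≤ tf → tf - t ≤ K → ∀ w, Feasible f h x₀ umax ymax tf w →
      ∀ ν, w t ≤ ν → ν ≤ umax → (∀ i, h (traj f x₀ w t) ν i ≤ ymax i) →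
      ∃ w', Feasible f h x₀ umax ymax tf w' ∧ (∀ s < t, w' s = w s) ∧ w' t = ν := by
  have hhcu : ∀ i, Continuous fun q : (Fin n → ℝ) × ℝ => h q.1 q.2 i :=
    fun i => (hhdiff i).continuous
  intro K
  induction K with
  | zero =>
    intro t ht hK w hw ν _ h2 h3
    have hteq : t = tf := by omega
    subst hteq
    exact nb_last w hw ν h2 h3
  | succ K ih =>
    intro t ht hK w hw ν h1 h2 h3
    rcases eq_or_lt_of_le ht with hteq | htlt
    · subst hteq
      exact nb_last w hw ν h2 h3
    -- main case : t < tf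
    -- greedy-tail construction from time t+1 on, via induction hypothesis
    have glem : ∀ σ, Feasible f h x₀ umax ymax tf σ →
        ∃ g, Feasible f h x₀ umax ymax tf g ∧ (∀ s ≤ t, g s = σ s) ∧
          ∀ s, t < s → s ≤ tf → g s = bIn h umax ymax (traj f x₀ g s) := by
      intro σ hσ
      suffices H : ∀ m, ∃ g, Feasible f h x₀ umax ymax tf g ∧ (∀ s ≤ t, g s = σ s) ∧
          ∀ s, t < s → s ≤ tf → s < t + 1 + m → g s = bIn h umax ymax (traj f x₀ g s) by
        obtain ⟨g, hg1, hg2, hg3⟩ := H (tf + 1)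
        exact ⟨g, hg1, hg2, fun s hs1 hs2 => hg3 s hs1 hs2 (by omega)⟩
      intro m
      induction m with
      | zero => exact ⟨σ, hσ, fun _ _ => rfl, fun s hs1 hs2 hs3 => absurd hs3 (by omega)⟩
      | succ m ihm =>
        obtain ⟨g, hg, hpre, hgr⟩ := ihm
        by_cases hcase : t + 1 + m ≤ tf
        · have hmem : g (t + 1 + m) ∈ Sset h umax ymax (traj f x₀ g (t + 1 + m)) :=
            ⟨(hg _ hcase).1, (hg _ hcase).2⟩
          have hlmem : bIn h umax ymax (traj f x₀ g (t + 1 + m)) ∈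
              Sset h umax ymax (traj f x₀ g (t + 1 + m)) := bIn_mem hhcu ⟨_, hmem⟩
          obtain ⟨g', hg', hpre', hval'⟩ := ih (t + 1 + m) hcase (by omega) g hg
            (bIn h umax ymax (traj f x₀ g (t + 1 + m))) (bIn_ub hmem) hlmem.1 hlmem.2
          refine ⟨g', hg', fun s hs => (hpre' s (by omega)).trans (hpre s hs), ?_⟩
          intro s hs1 hs2 hs3
          have htreq : traj f x₀ g' s = traj f x₀ g s :=
            traj_congr f x₀ _ _ s fun r hr => hpre' r (by omega)
          rcases lt_or_eq_of_le (show s ≤ t + 1 + m by omega) with hlt | heq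
          · rw [hpre' s hlt, htreq]
            exact hgr s hs1 hs2 hlt
          · subst heq
            rw [hval', htreq]
        · exact ⟨g, hg, hpre, fun s hs1 hs2 _ => hgr s hs1 hs2 (by omega)⟩
    have hx_tR : traj f x₀ w t ∈ Reach f h x₀ umax ymax tf := ⟨w, hw, t, ht, rfl⟩
    set D : Set ℝ := {μ | w t ≤ μ ∧ μ ≤ ν ∧ ∃ w', Feasible f h x₀ umax ymax tf w' ∧
      (∀ s < t, w' s = w s) ∧ w' t = μ} with hD
    have hDne : w t ∈ D := ⟨le_rfl, h1, w, hw, fun _ _ => rfl, rfl⟩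
    have hDbdd : BddAbove D := ⟨ν, fun μ hμ => hμ.2.1⟩
    set c := sSup D with hc
    have hwtc : w t ≤ c := le_csSup hDbdd hDne
    have hcν : c ≤ ν := csSup_le ⟨_, hDne⟩ fun μ hμ => hμ.2.1
    -- c is attained: c ∈ D
    have hcD : c ∈ D := by
      -- a monotone sequence in D tending to c
      have hseq : ∀ k : ℕ, ∃ μ, μ ∈ D ∧ c - 1 / ((k : ℝ) + 1) < μ := by
        intro k
        have hpos : (0 : ℝ) < 1 / ((k : ℝ) + 1) := by positivity
        obtain ⟨μ, hμD, hμgt⟩ := exists_lt_of_lt_csSup ⟨_, hDne⟩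
          (show c - 1 / ((k : ℝ) + 1) < sSup D by rw [← hc]; linarith)
        exact ⟨μ, hμD, hμgt⟩
      choose μ0 hμ0D hμ0gt using hseq
      set μs : ℕ → ℝ := fun k => (Finset.range (k + 1)).sup' ⟨0, by simp⟩ μ0 with hμs
      have hμsD : ∀ k, μs k ∈ D := by
        intro k
        obtain ⟨j, _, hje⟩ := Finset.exists_mem_eq_sup' (⟨0, by simp⟩ :
          (Finset.range (k + 1)).Nonempty) μ0
        have hje2 : μs k = μ0 j := hje
        rw [hje2]; exact hμ0D j
      have hμsmono : Monotone μs := by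
        apply monotone_nat_of_le_succ
        intro k
        apply Finset.sup'_le
        intro j hj
        exact Finset.le_sup' μ0 (by simp at hj ⊢; omega)
      have hμsc : ∀ k, μs k ≤ c := by
        intro k
        apply Finset.sup'_le
        intro j _
        exact le_csSup hDbdd (hμ0D j)
      have hμslb : ∀ k : ℕ, c - 1 / ((k : ℝ) + 1) ≤ μs k := by
        intro k
        exact le_trans (le_of_lt (hμ0gt k)) (Finset.le_sup' μ0 (by simp))
      have hμstend : Tendsto μs atTop (nhds c) := by
        refine tendsto_of_tendsto_of_tendsto_of_le_of_le ?_ tendsto_const_nhds hμslb hμsc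
        have ha := tendsto_one_div_add_atTop_nhds_zero_nat (𝕜 := ℝ)
        have h2 : Tendsto (fun _ : ℕ => c) atTop (nhds c) := tendsto_const_nhds
        have := h2.sub ha
        simpa using this
      -- witnesses with greedy tails
      choose W hWf hWp hWv using fun k => (hμsD k).2.2
      choose G hGf hGp hGg using fun k => glem (W k) (hWf k)
      have hGw : ∀ k, ∀ s < t, G k s = w s :=
        fun k s hs => (hGp k s (le_of_lt hs)).trans (hWp k s hs)
      have hGt : ∀ k, G k t = μs k := fun k => (hGp k t le_rfl).trans (hWv k)
      have hGR : ∀ k s, s ≤ tf → traj f x₀ (G k) s ∈ Reach f h x₀ umax ymax tf :=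
        fun k s hs => ⟨G k, hGf k, s, hs, rfl⟩
      -- monotonicity in k
      have hIC : ∀ k s, s ≤ tf → traj f x₀ (G k) s ≤ traj f x₀ (G (k + 1)) s →
          G k s ≤ G (k + 1) s := by
        intro k s hs hstate
        rcases lt_trichotomy s t with hlt | heq | hgt
        · rw [hGw k s hlt, hGw (k + 1) s hlt]
        · subst heq
          rw [hGt k, hGt (k + 1)]
          exact hμsmono (Nat.le_succ k)
        · rw [hGg k s hgt hs, hGg (k + 1) s hgt hs]
          exact bIn_mono hhdecx ⟨G k s, (hGf k s hs).1, (hGf k s hs).2⟩ hstate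
      have hSM : ∀ k s, s ≤ tf → traj f x₀ (G k) s ≤ traj f x₀ (G (k + 1)) s := by
        intro k s
        induction s with
        | zero => intro _; exact le_rfl
        | succ s ihs =>
          intro hs1
          have hs : s ≤ tf := by omega
          rw [traj_succ, traj_succ]
          exact hfmono _ _ (hGR (k + 1) s hs) (hGR k s hs) _ _ ((hGf (k + 1)) s hs).1
            ((hGf k) s hs).1 (ihs hs) (hIC k s hs (ihs hs))
      have hinputM : ∀ s, s ≤ tf → Monotone fun k => G k s :=
        fun s hs => monotone_nat_of_le_succ fun k => hIC k s hs (hSM k s hs)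
      -- the limit sequence
      set winf : ℕ → ℝ := fun s => if s < t then w s else if s = t then c else ⨆ k, G k s
        with hwinf
      have hwinf_lt : ∀ s < t, winf s = w s := by
        intro s hs
        show (if s < t then w s else if s = t then c else ⨆ k, G k s) = w s
        rw [if_pos hs]
      have hwinf_t : winf t = c := by
        show (if t < t then w t else if t = t then c else ⨆ k, G k t) = c
        rw [if_neg (lt_irrefl t), if_pos rfl]
      have hwinf_gt : ∀ s, t < s → winf s = ⨆ k, G k s := by
        intro s hs
        show (if s < t then w s else if s = t then c else ⨆ k, G k s) = ⨆ k, G k s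
        rw [if_neg (by omega), if_neg (by omega)]
      have hGbddA : ∀ s, s ≤ tf → BddAbove (Set.range fun k => G k s) := by
        intro s hs
        refine ⟨umax, ?_⟩
        rintro x ⟨k, rfl⟩
        exact (hGf k s hs).1
      have hinT : ∀ s, s ≤ tf → Tendsto (fun k => G k s) atTop (nhds (winf s)) := by
        intro s hs
        rcases lt_trichotomy s t with hlt | heq | hgt
        · rw [hwinf_lt s hlt]
          have : (fun k => G k s) = fun _ => w s := funext fun k => hGw k s hlt
          rw [this]; exact tendsto_const_nhds
        · subst heq
          rw [hwinf_t]
          have : (fun k => G k s) = μs := funext fun k => hGt k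
          rw [this]; exact hμstend
        · rw [hwinf_gt s hgt]
          exact tendsto_atTop_ciSup (hinputM s hs) (hGbddA s hs)
      have hstT : ∀ s, s ≤ tf → Tendsto (fun k => traj f x₀ (G k) s) atTop
          (nhds (traj f x₀ winf s)) := by
        intro s
        induction s with
        | zero => intro _; exact tendsto_const_nhds
        | succ s ihs =>
          intro hs1
          have hs : s ≤ tf := by omega
          have hrw : (fun k => traj f x₀ (G k) (s + 1))
              = fun k => f (traj f x₀ (G k) s) (G k s) := rfl
          rw [hrw, traj_succ]
          exact (hfcont.tendsto _).comp ((ihs hs).prodMk_nhds (hinT s hs))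
      have hwinf_feas : Feasible f h x₀ umax ymax tf winf := by
        intro s hs
        constructor
        · rcases lt_trichotomy s t with hlt | heq | hgt
          · rw [hwinf_lt s hlt]; exact (hw s hs).1
          · subst heq; rw [hwinf_t]; exact hcν.trans h2
          · rw [hwinf_gt s hgt]
            exact ciSup_le fun k => (hGf k s hs).1
        · intro i
          have hterm : ∀ k, h (traj f x₀ (G k) s) (G k s) i ≤ ymax i :=
            fun k => (hGf k s hs).2 i
          have htend : Tendsto (fun k => h (traj f x₀ (G k) s) (G k s) i) atTop
              (nhds (h (traj f x₀ winf s) (winf s) i)) :=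
            ((hhcu i).tendsto _).comp ((hstT s hs).prodMk_nhds (hinT s hs))
          exact le_of_tendsto htend (Filter.Eventually.of_forall hterm)
      exact ⟨hwtc, hcν, winf, hwinf_feas, hwinf_lt, hwinf_t⟩
    rcases eq_or_lt_of_le hcν with hceq | hclt
    · obtain ⟨_, _, w', hw'f, hw'p, hw'v⟩ := hcD
      exact ⟨w', hw'f, hw'p, by rw [hw'v, hceq]⟩
    -- c < ν : derive a contradiction by pushing past c
    exfalso
    -- strictified witness
    obtain ⟨τ, hτf, hτp, hτt, hτs⟩ : ∃ τ, Feasible f h x₀ umax ymax tf τ ∧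
        (∀ s < t, τ s = w s) ∧ τ t = c ∧
        ∀ s, t < s → s ≤ tf → ∀ i, h (traj f x₀ τ s) (τ s) i < ymax i := by
      obtain ⟨_, _, w0, hw0f, hw0p, hw0v⟩ := hcD
      suffices H : ∀ m, m ≤ tf - t → ∃ τ, Feasible f h x₀ umax ymax tf τ ∧
          (∀ s < t, τ s = w s) ∧ τ t = c ∧
          ∀ s, tf - m < s → s ≤ tf → ∀ i, h (traj f x₀ τ s) (τ s) i < ymax i by
        obtain ⟨τ, ha, hb, hcc, hd⟩ := H (tf - t) le_rfl
        exact ⟨τ, ha, hb, hcc, fun s hs1 hs2 i => hd s (by omega) hs2 i⟩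
      intro m
      induction m with
      | zero =>
        intro _
        exact ⟨w0, hw0f, hw0p, hw0v, fun s hs1 hs2 i => absurd (lt_of_lt_of_le hs1 hs2)
          (by omega)⟩
      | succ m ihm =>
        intro hm1
        obtain ⟨τ, hτf, hτp, hτt, hτs⟩ := ihm (by omega)
        set r := tf - m with hr
        have hrt : t < r := by omega
        have hrtf : r ≤ tf := by omega
        have hτrR : traj f x₀ τ r ∈ Reach f h x₀ umax ymax tf := ⟨τ, hτf, r, hrtf, rfl⟩
        have hcontst := traj_update_cont x₀ hfcont τ r
        have hEV : ∀ s, r < s → s ≤ tf → ∀ i, ∀ᶠ δ in nhdsWithin (0 : ℝ) (Set.Ioi 0),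
            h (traj f x₀ (Function.update τ r (τ r - δ)) s) (τ s) i < ymax i := by
          intro s hs1 hs2 i
          have hsub : Continuous fun δ : ℝ => τ r - δ := continuous_const.sub continuous_id
          have hcont : Continuous fun δ : ℝ =>
              h (traj f x₀ (Function.update τ r (τ r - δ)) s) (τ s) i :=
            (hhcu i).comp (((hcontst s).comp hsub).prodMk continuous_const)
          have hval : h (traj f x₀ (Function.update τ r (τ r - 0)) s) (τ s) i < ymax i := by
            rw [sub_zero, Function.update_eq_self]
            exact hτs s (by omega) hs2 i
          have hev : ∀ᶠ δ in nhds (0 : ℝ),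
              h (traj f x₀ (Function.update τ r (τ r - δ)) s) (τ s) i < ymax i :=
            (hcont.tendsto 0).eventually_lt_const hval
          exact hev.filter_mono nhdsWithin_le_nhds
        have hEVall : ∀ᶠ δ in nhdsWithin (0 : ℝ) (Set.Ioi 0),
            (∀ s ∈ Finset.Ioc r tf, ∀ i,
              h (traj f x₀ (Function.update τ r (τ r - δ)) s) (τ s) i < ymax i)
            ∧ δ ∈ Set.Ioi (0 : ℝ) := by
          refine Filter.Eventually.and ((eventually_all_finset _).2 ?_)
            eventually_mem_nhdsWithin
          intro s hs
          exact eventually_all.2 fun i => hEV s (Finset.mem_Ioc.1 hs).1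
            (Finset.mem_Ioc.1 hs).2 i
        obtain ⟨δ, hδprop, hδpos⟩ := hEVall.exists
        rw [Set.mem_Ioi] at hδpos
        set τ' := Function.update τ r (τ r - δ) with hτ'
        have hτ'eq : ∀ s, s ≠ r → τ' s = τ s := fun s hs => Function.update_of_ne hs _ _
        have hτ'r : τ' r = τ r - δ := Function.update_self _ _ _
        have htreq : ∀ s, s ≤ r → traj f x₀ τ' s = traj f x₀ τ s :=
          fun s hs => traj_congr f x₀ _ _ s fun q hq => Function.update_of_ne (by omega) _ _
        have hstrict_r : ∀ i, h (traj f x₀ τ' r) (τ' r) i < ymax i := by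
          intro i
          rw [htreq r le_rfl, hτ'r]
          calc h (traj f x₀ τ r) (τ r - δ) i < h (traj f x₀ τ r) (τ r) i :=
                hhmono _ hτrR i (by linarith)
            _ ≤ ymax i := (hτf r hrtf).2 i
        have hτ'f : Feasible f h x₀ umax ymax tf τ' := by
          intro s hs
          rcases lt_trichotomy s r with hlt | heq | hgt
          · rw [hτ'eq s (by omega), htreq s (le_of_lt hlt)]
            exact hτf s hs
          · subst heq
            refine ⟨?_, fun i => le_of_lt (hstrict_r i)⟩
            rw [hτ'r]
            linarith [(hτf r hrtf).1]
          · rw [hτ'eq s (by omega)]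
            refine ⟨(hτf s hs).1, fun i => le_of_lt ?_⟩
            exact hδprop s (Finset.mem_Ioc.2 ⟨hgt, hs⟩) i
        refine ⟨τ', hτ'f, fun s hs => (hτ'eq s (by omega)).trans (hτp s hs),
          (hτ'eq t (by omega)).trans hτt, ?_⟩
        intro s hs1 hs2 i
        rcases eq_or_lt_of_le (show r ≤ s by omega) with heq | hgt
        · subst heq; exact hstrict_r i
        · rw [hτ'eq s (by omega)]
          exact hδprop s (Finset.mem_Ioc.2 ⟨hgt, hs2⟩) i
    -- push τ at time t slightly beyond c
    have hcontst := traj_update_cont x₀ hfcont τ t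
    have hxteq : traj f x₀ τ t = traj f x₀ w t :=
      traj_congr f x₀ _ _ t fun q hq => hτp q hq
    have hEV2 : ∀ s, t < s → s ≤ tf → ∀ i, ∀ᶠ ε in nhdsWithin (0 : ℝ) (Set.Ioi 0),
        h (traj f x₀ (Function.update τ t (c + ε)) s) (τ s) i < ymax i := by
      intro s hs1 hs2 i
      have hadd : Continuous fun ε : ℝ => c + ε := continuous_const.add continuous_id
      have hcont : Continuous fun ε : ℝ =>
          h (traj f x₀ (Function.update τ t (c + ε)) s) (τ s) i :=
        (hhcu i).comp (((hcontst s).comp hadd).prodMk continuous_const)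
      have hval : h (traj f x₀ (Function.update τ t (c + 0)) s) (τ s) i < ymax i := by
        rw [add_zero, show c = τ t from hτt.symm, Function.update_eq_self]
        exact hτs s hs1 hs2 i
      have hev : ∀ᶠ ε in nhds (0 : ℝ),
          h (traj f x₀ (Function.update τ t (c + ε)) s) (τ s) i < ymax i :=
        (hcont.tendsto 0).eventually_lt_const hval
      exact hev.filter_mono nhdsWithin_le_nhds
    have hEV2all : ∀ᶠ ε in nhdsWithin (0 : ℝ) (Set.Ioi 0),
        (∀ s ∈ Finset.Ioc t tf, ∀ i,
          h (traj f x₀ (Function.update τ t (c + ε)) s) (τ s) i < ymax i)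
        ∧ ε ∈ Set.Ioo (0 : ℝ) (ν - c) := by
      refine Filter.Eventually.and ((eventually_all_finset _).2 ?_)
        (Filter.eventually_iff_exists_mem.2 ⟨Set.Ioo (0 : ℝ) (ν - c),
          Ioo_mem_nhdsGT_of_mem ⟨le_rfl, by linarith⟩, fun x hx => hx⟩)
      intro s hs
      exact eventually_all.2 fun i => hEV2 s (Finset.mem_Ioc.1 hs).1
        (Finset.mem_Ioc.1 hs).2 i
    obtain ⟨ε, hεprop, hεmem⟩ := hEV2all.exists
    obtain ⟨hεpos, hεlt⟩ := hεmem
    set π := Function.update τ t (c + ε) with hπ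
    have hπeq : ∀ s, s ≠ t → π s = τ s := fun s hs => Function.update_of_ne hs _ _
    have hπt : π t = c + ε := Function.update_self _ _ _
    have hπtreq : ∀ s, s ≤ t → traj f x₀ π s = traj f x₀ τ s :=
      fun s hs => traj_congr f x₀ _ _ s fun q hq => Function.update_of_ne (by omega) _ _
    have hπf : Feasible f h x₀ umax ymax tf π := by
      intro s hs
      rcases lt_trichotomy s t with hlt | heq | hgt
      · rw [hπeq s (by omega), hπtreq s (le_of_lt hlt)]
        exact hτf s hs
      · subst heq
        constructor
        · rw [hπt]; linarith
        · intro i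
          rw [hπt, hπtreq s le_rfl, hxteq]
          calc h (traj f x₀ w s) (c + ε) i ≤ h (traj f x₀ w s) ν i :=
                (hhmono _ hx_tR i).monotone (by linarith)
            _ ≤ ymax i := h3 i
      · rw [hπeq s (by omega)]
        refine ⟨(hτf s hs).1, fun i => le_of_lt ?_⟩
        exact hεprop s (Finset.mem_Ioc.2 ⟨hgt, hs⟩) i
    have hπD : c + ε ∈ D := ⟨by linarith, by linarith, π, hπf,
      fun s hs => (hπeq s (by omega)).trans (hτp s hs), hπt⟩
    have : c + ε ≤ c := le_csSup hDbdd hπD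
    linarith

end BangRideAux

/-- Theorem 2: if in addition the output map `h` is differentiable, decreasing in the
state, and has strictly positive partial derivative in the input, then there is an
optimal solution of bang-ride type: at least one inequality constraint is active at
every time step. -/
theorem exists_bang_ride_optimal_decreasing_output {n p tf : ℕ}
    (f : (Fin n → ℝ) → ℝ → (Fin n → ℝ))
    (h : (Fin n → ℝ) → ℝ → (Fin p → ℝ))
    (L : (Fin n → ℝ) → ℝ → ℝ)
    (x₀ : Fin n → ℝ) (umax : ℝ) (ymax : Fin p → ℝ)
    -- (A1) monotone cost
    (hLcont : Continuous fun q : (Fin n → ℝ) × ℝ => L q.1 q.2)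
    (hLmono : ∀ (x₁ x₂ : Fin n → ℝ) (u₁ u₂ : ℝ), x₂ ≤ x₁ → u₂ ≤ u₁ → L x₂ u₂ ≤ L x₁ u₁)
    -- (A2) monotone system
    (hfcont : Continuous fun q : (Fin n → ℝ) × ℝ => f q.1 q.2)
    (hfmono : ∀ x₁ x₂ : Fin n → ℝ, x₁ ∈ Reach f h x₀ umax ymax tf →
      x₂ ∈ Reach f h x₀ umax ymax tf → ∀ u₁ u₂ : ℝ, u₁ ≤ umax → u₂ ≤ umax →
      x₂ ≤ x₁ → u₂ ≤ u₁ → f x₂ u₂ ≤ f x₁ u₁)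
    -- (A3) monotone constraint: continuous in x, strictly increasing in u
    (hhcontx : ∀ u ≤ umax, ∀ i, Continuous fun x : Fin n → ℝ => h x u i)
    (hhmono : ∀ x ∈ Reach f h x₀ umax ymax tf, ∀ i, StrictMono fun v => h x v i)
    -- additional assumptions of Theorem 2
    (hhdiff : ∀ i, Differentiable ℝ fun q : (Fin n → ℝ) × ℝ => h q.1 q.2 i)
    (hhdecx : ∀ (x₁ x₂ : Fin n → ℝ) (u : ℝ), x₂ ≤ x₁ → ∀ i, h x₁ u i ≤ h x₂ u i)
    (hhderiv : ∀ x ∈ Reach f h x₀ umax ymax tf, ∀ u ≤ umax, ∀ i,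
      0 < deriv (fun v => h x v i) u)
    -- an optimal solution exists
    (hex : ∃ u, Optimal f h L x₀ umax ymax tf u) :
    ∃ ustar, Optimal f h L x₀ umax ymax tf ustar ∧
      ∀ t ≤ tf, ustar t = umax ∨ ∃ i, h (traj f x₀ ustar t) (ustar t) i = ymax i := by
  classical
  obtain ⟨u0, hu0⟩ := hex
  have hu0f : Feasible f h x₀ umax ymax tf u0 := hu0.1
  have hhcu : ∀ i, Continuous fun q : (Fin n → ℝ) × ℝ => h q.1 q.2 i :=
    fun i => (hhdiff i).continuous
  have NB := nb hfcont hfmono hhmono hhdiff hhdecx (tf := tf) (x₀ := x₀) tf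
  -- full greedy sequence
  obtain ⟨g, hgf, hgg⟩ : ∃ g, Feasible f h x₀ umax ymax tf g ∧
      ∀ s ≤ tf, g s = bIn h umax ymax (traj f x₀ g s) := by
    suffices H : ∀ m, ∃ g, Feasible f h x₀ umax ymax tf g ∧
        ∀ s, s < m → s ≤ tf → g s = bIn h umax ymax (traj f x₀ g s) by
      obtain ⟨g, hg1, hg2⟩ := H (tf + 1)
      exact ⟨g, hg1, fun s hs => hg2 s (by omega) hs⟩
    intro m
    induction m with
    | zero => exact ⟨u0, hu0f, fun s hs1 _ => absurd hs1 (by omega)⟩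
    | succ m ihm =>
      obtain ⟨g, hg, hgr⟩ := ihm
      by_cases hcase : m ≤ tf
      · have hmem : g m ∈ Sset h umax ymax (traj f x₀ g m) := ⟨(hg m hcase).1, (hg m hcase).2⟩
        have hlmem : bIn h umax ymax (traj f x₀ g m) ∈ Sset h umax ymax (traj f x₀ g m) :=
          bIn_mem hhcu ⟨_, hmem⟩
        obtain ⟨g', hg', hpre', hval'⟩ := NB m hcase (by omega) g hg
          (bIn h umax ymax (traj f x₀ g m)) (bIn_ub hmem) hlmem.1 hlmem.2
        refine ⟨g', hg', ?_⟩
        intro s hs1 hs2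
        have htreq : traj f x₀ g' s = traj f x₀ g s :=
          traj_congr f x₀ _ _ s fun r hr => hpre' r (by omega)
        rcases lt_or_eq_of_le (show s ≤ m by omega) with hlt | heq
        · rw [hpre' s hlt, htreq]
          exact hgr s hlt hs2
        · subst heq
          rw [hval', htreq]
      · exact ⟨g, hg, fun s hs1 hs2 => hgr s (by omega) hs2⟩
  -- domination of the greedy sequence over u0
  have hgR : ∀ s, s ≤ tf → traj f x₀ g s ∈ Reach f h x₀ umax ymax tf :=
    fun s hs => ⟨g, hgf, s, hs, rfl⟩
  have hu0R : ∀ s, s ≤ tf → traj f x₀ u0 s ∈ Reach f h x₀ umax ymax tf :=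
    fun s hs => ⟨u0, hu0f, s, hs, rfl⟩
  have hU0S : ∀ s, s ≤ tf → traj f x₀ u0 s ≤ traj f x₀ g s →
      u0 s ∈ Sset h umax ymax (traj f x₀ g s) := by
    intro s hs hle
    exact ⟨(hu0f s hs).1, fun i => le_trans (hhdecx _ _ _ hle i) ((hu0f s hs).2 i)⟩
  have DOMst : ∀ s, s ≤ tf → traj f x₀ u0 s ≤ traj f x₀ g s := by
    intro s
    induction s with
    | zero => intro _; exact le_rfl
    | succ s ihs =>
      intro hs1
      have hs : s ≤ tf := by omega
      have hst := ihs hs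
      have hin : u0 s ≤ g s := by
        rw [hgg s hs]
        exact bIn_ub (hU0S s hs hst)
      rw [traj_succ, traj_succ]
      exact hfmono _ _ (hgR s hs) (hu0R s hs) _ _ ((hgf s hs).1) ((hu0f s hs).1) hst hin
  have DOMin : ∀ s, s ≤ tf → u0 s ≤ g s := by
    intro s hs
    rw [hgg s hs]
    exact bIn_ub (hU0S s hs (DOMst s hs))
  have hcost : Cost f L x₀ tf u0 ≤ Cost f L x₀ tf g := by
    refine Finset.sum_le_sum ?_
    intro s hs
    have hs' : s ≤ tf := Nat.lt_succ_iff.1 (Finset.mem_range.1 hs)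
    exact hLmono _ _ _ _ (DOMst s hs') (DOMin s hs')
  refine ⟨g, ⟨hgf, fun v hv => le_trans (hu0.2 v hv) hcost⟩, ?_⟩
  intro t ht
  have hne : (Sset h umax ymax (traj f x₀ g t)).Nonempty :=
    ⟨g t, (hgf t ht).1, (hgf t ht).2⟩
  have := bIn_active hhcu hne
  rw [← hgg t ht] at this
  exact this
end

section
/- (Necessity of the decreasing impulse response in Theorem 3.) Consider the two-step linear problem: maximize J(u) = u_0 + u_1 subject to x_1 = A x_0 + B u_0, u_0 ≤ u_max, u_1 ≤ u_max, D u_0 ≤ y_max, and C x_1 + D u_1 ≤ y_max, where x_0 = 0, u_max > 0, y_max = D u_max, A, B, C are entrywise nonnegative, and every entry of D is strictly positive. Let γ = min_i (D_i − (CB)_i)/D_i. Then: (i) every feasible sequence (u_0,u_1) that is bang-ride (i.e., at each of t = 0 and t = 1 at least one of the inequality constraints holds with equality) satisfies u_0 = u_max and u_1 = γ u_max, so its cost is (1+γ) u_max; (ii) the sequence (0, u_max) is feasible with cost u_max; (iii) consequently, if γ < 0 (equivalently, if some component of CB exceeds the corresponding component of D, i.e., the impulse response is increasing from step 0 to step 1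 in that component), then no bang-ride sequence is optimal. -/
open Matrix

/-- Feasibility for the two-step problem with `x_0 = 0`, `x_1 = A x_0 + B u_0`,
and `y_max = D u_max`: `u_t ≤ u_max` and `C x_t + D u_t ≤ y_max` for `t = 0,1`. -/
def Feas2 {n p : ℕ} (A : Matrix (Fin n) (Fin n) ℝ) (B : Fin n → ℝ)
    (C : Matrix (Fin p) (Fin n) ℝ) (D : Fin p → ℝ) (umax : ℝ)
    (u0 u1 : ℝ) : Prop :=
  u0 ≤ umax ∧ u1 ≤ umax ∧
    (∀ i, C.mulVec (0 : Fin n → ℝ) i + D i * u0 ≤ D i * umax) ∧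
    (∀ i, C.mulVec (A.mulVec (0 : Fin n → ℝ) + u0 • B) i + D i * u1 ≤ D i * umax)

/-- Bang-ride for the two-step problem: at each of `t = 0` and `t = 1`,
at least one inequality constraint is active. -/
def BangRide2 {n p : ℕ} (A : Matrix (Fin n) (Fin n) ℝ) (B : Fin n → ℝ)
    (C : Matrix (Fin p) (Fin n) ℝ) (D : Fin p → ℝ) (umax : ℝ)
    (u0 u1 : ℝ) : Prop :=
  (u0 = umax ∨ ∃ i, C.mulVec (0 : Fin n → ℝ) i + D i * u0 = D i * umax) ∧
    (u1 = umax ∨ ∃ i, C.mulVec (A.mulVec (0 : Fin n → ℝ) + u0 • B) i + D i * u1 = D i * umax)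

/-- Necessity of the decreasing impulse response in Theorem 3: with `γ = min_i (D_i −
(CB)_i)/D_i`, (i) every feasible bang-ride sequence is `(u_max, γ u_max)` with cost
`(1+γ) u_max`; (ii) `(0, u_max)` is feasible with cost `u_max`; (iii) hence if `γ < 0`
no bang-ride sequence is optimal. -/
theorem bang_ride_not_optimal_of_increasing_impulse {n p : ℕ} (hp : 0 < p)
    (A : Matrix (Fin n) (Fin n) ℝ) (B : Fin n → ℝ)
    (C : Matrix (Fin p) (Fin n) ℝ) (D : Fin p → ℝ) (umax : ℝ)
    (hA : ∀ i j, 0 ≤ A i j) (hB : ∀ i, 0 ≤ B i)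
    (hC : ∀ i j, 0 ≤ C i j) (hD : ∀ i, 0 < D i)
    (humax : 0 < umax)
    (γ : ℝ)
    (hγ : γ = Finset.univ.inf' ⟨⟨0, hp⟩, Finset.mem_univ _⟩
      fun i => (D i - C.mulVec B i) / D i) :
    (∀ u0 u1 : ℝ, Feas2 A B C D umax u0 u1 → BangRide2 A B C D umax u0 u1 →
        u0 = umax ∧ u1 = γ * umax ∧ u0 + u1 = (1 + γ) * umax) ∧
    (Feas2 A B C D umax 0 umax ∧ (0 : ℝ) + umax = umax) ∧
    (γ < 0 → ∀ u0 u1 : ℝ, Feas2 A B C D umax u0 u1 → BangRide2 A B C D umax u0 u1 →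
        ¬ ∀ v0 v1 : ℝ, Feas2 A B C D umax v0 v1 → v0 + v1 ≤ u0 + u1) := by
  have hCB : ∀ i, 0 ≤ C.mulVec B i := by
    intro i
    unfold Matrix.mulVec dotProduct
    exact Finset.sum_nonneg fun j _ => mul_nonneg (hC i j) (hB j)
  obtain ⟨j, -, hjmin⟩ := Finset.exists_mem_eq_inf'
    (⟨⟨0, hp⟩, Finset.mem_univ _⟩ : (Finset.univ : Finset (Fin p)).Nonempty)
    (fun i => (D i - C.mulVec B i) / D i)
  have hγj : γ = (D j - C.mulVec B j) / D j := hγ.trans hjmin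
  have hγle : ∀ i, γ ≤ (D i - C.mulVec B i) / D i := fun i =>
    hγ ▸ Finset.inf'_le _ (Finset.mem_univ i)
  have hDγi : ∀ i, γ * D i ≤ D i - C.mulVec B i := fun i =>
    (le_div_iff₀ (hD i)).mp (hγle i)
  have hDγj : γ * D j = D j - C.mulVec B j := by
    rw [hγj, div_mul_cancel₀ _ (hD j).ne']
  have key : ∀ u0 u1 : ℝ, Feas2 A B C D umax u0 u1 → BangRide2 A B C D umax u0 u1 →
      u0 = umax ∧ u1 = γ * umax ∧ u0 + u1 = (1 + γ) * umax := by
    intro u0 u1 hf hbr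
    simp only [Feas2, BangRide2, Matrix.mulVec_zero, Pi.zero_apply, zero_add,
      Matrix.mulVec_smul, Pi.smul_apply, smul_eq_mul] at hf hbr
    obtain ⟨hu0, hu1, hc0, hc1⟩ := hf
    obtain ⟨hb0, hb1⟩ := hbr
    have hu0eq : u0 = umax := by
      rcases hb0 with h | ⟨i, hi⟩
      · exact h
      · exact mul_left_cancel₀ (hD i).ne' hi
    rw [hu0eq] at hc1 hb1
    -- upper bound: u1 ≤ γ * umax from constraint at minimizing index j
    have hub : u1 ≤ γ * umax := by
      have := hc1 j
      have hDj := hD j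
      nlinarith [hDγj]
    have hu1eq : u1 = γ * umax := by
      rcases hb1 with h | ⟨i, hi⟩
      · have hCBj0 : C.mulVec B j = 0 := by
          by_contra hne
          have hpos : 0 < C.mulVec B j := lt_of_le_of_ne (hCB j) (Ne.symm hne)
          have h1 := hc1 j
          rw [h] at h1
          nlinarith [mul_pos humax hpos]
        have hγ1 : γ = 1 := by
          have h2 := hDγj
          rw [hCBj0, sub_zero] at h2
          exact mul_right_cancel₀ (hD j).ne' (by linarith)
        rw [h, hγ1, one_mul]
      · have hge : γ * umax ≤ u1 := by
          have hDi := hD i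
          nlinarith [hDγi i]
        linarith
    exact ⟨hu0eq, hu1eq, by rw [hu0eq, hu1eq]; ring⟩
  have feas0 : Feas2 A B C D umax 0 umax := by
    refine ⟨humax.le, le_refl _, fun i => ?_, fun i => ?_⟩ <;>
      simp [Matrix.mulVec_zero, mul_le_mul_iff_right₀ (hD i), humax.le,
        mul_nonneg (hD i).le humax.le]
  refine ⟨key, ⟨feas0, zero_add umax⟩, ?_⟩
  intro hγneg u0 u1 hf hbr hopt
  obtain ⟨_, _, hsum⟩ := key u0 u1 hf hbr
  have := hopt 0 umax feas0
  rw [hsum, zero_add] at this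
  nlinarith
end

section
/- Let N ∈ ℕ, let g : ℕ → ℝ satisfy g(0) > 0 and g(t) ≥ g(t+1) for all t ∈ {0,…,N−1} (g is decreasing on [0,N]), and let ε : ℕ → ℝ satisfy ε(0) > 0 and ∑_{k=0}^{m} g(m−k) ε(k) = 0 for every m ∈ {1,…,N}. Define the partial sums σ(m) = ∑_{j=0}^{m} ε(j). Then σ(m) ≥ 0 for every m ∈ {0,…,N}. -/
/-!
Summation by parts turns the convolution `∑_{k ≤ m} g(m-k) ε(k)` into
`g(0) σ(m) - ∑_{k < m} (g(m-k-1) - g(m-k)) σ(k)`. When the convolution vanishes, `g(0) σ(m)` is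
therefore a combination of the earlier partial sums with the nonnegative weights
`g(m-k-1) - g(m-k)`, so nonnegativity of `σ` propagates by strong induction from `σ(0) = ε(0) > 0`.
-/

open Finset

theorem mul_sum_range_eq_convolution_add_sum_sub_mul {R : Type*} [CommRing R] (g ε : ℕ → R)
    (m : ℕ) :
    g 0 * ∑ j ∈ range (m + 1), ε j =
      ∑ k ∈ range (m + 1), g (m - k) * ε k +
        ∑ k ∈ range m, (g (m - (k + 1)) - g (m - k)) * ∑ j ∈ range (k + 1), ε j := by
  have abel := sum_range_by_parts (fun k => g (m - k)) ε (m + 1)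
  simp only [smul_eq_mul, Nat.add_sub_cancel, Nat.sub_self] at abel
  rw [abel]
  ring

theorem sum_sub_mul_nonneg_of_succ_le {R : Type*} [CommRing R] [PartialOrder R]
    [IsOrderedRing R] {g σ : ℕ → R} {m : ℕ} (hg : ∀ t < m, g (t + 1) ≤ g t)
    (hσ : ∀ k < m, 0 ≤ σ k) :
    0 ≤ ∑ k ∈ range m, (g (m - (k + 1)) - g (m - k)) * σ k := by
  refine sum_nonneg fun k hk => mul_nonneg (sub_nonneg.mpr ?_) (hσ k (mem_range.mp hk))
  have hk : k < m := mem_range.mp hk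
  have hidx : m - k = m - (k + 1) + 1 := by omega
  exact hidx ▸ hg _ (by omega)

/-- Sign-preservation lemma (Abel summation step in the proof of Theorem 3):
if `g` is decreasing on `[0,N]` with `g(0) > 0`, `ε(0) > 0`, and the convolution
constraint `∑_{k=0}^{m} g(m−k) ε(k) = 0` holds for every `m ∈ {1,…,N}`, then all the
partial sums `σ(m) = ∑_{j=0}^{m} ε(j)` are nonnegative for `m ∈ {0,…,N}`. -/
theorem partial_sums_nonneg_of_decreasing_convolution (N : ℕ) (g ε : ℕ → ℝ)
    (hg0 : 0 < g 0)
    (hgdec : ∀ t < N, g (t + 1) ≤ g t)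
    (hε0 : 0 < ε 0)
    (hconv : ∀ m, 1 ≤ m → m ≤ N → ∑ k ∈ Finset.range (m + 1), g (m - k) * ε k = 0) :
    ∀ m ≤ N, 0 ≤ ∑ j ∈ Finset.range (m + 1), ε j := by
  intro m
  induction m using Nat.strong_induction_on with
  | _ m ih =>
    intro hmN
    rcases Nat.eq_zero_or_pos m with rfl | hm
    · simpa using hε0.le
    have hweighted := sum_sub_mul_nonneg_of_succ_le (m := m)
      (fun t ht => hgdec t (by omega)) (fun k hk => ih k hk (by omega))
    have habel := mul_sum_range_eq_convolution_add_sum_sub_mul g ε m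
    rw [hconv m hm hmN, zero_add] at habel
    exact nonneg_of_mul_nonneg_right (habel ▸ hweighted) hg0
end
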